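/- The Mellin transform of the complementary error function erfc equals 2^{-s} Γ(s) / Γ(1 + s/2) for all complex s with Re(s) > 0. -/

import Mathlib

/-!
Integrating by parts against `x ^ s / s` (the boundary terms vanish since `erfc` is bounded near
`0` and decays exponentially), `𝓜[erfc](s) = (2 / (s √π)) 𝓜[e^{-x²}](s + 1)`, and the substitution
`x ↦ x²` gives `𝓜[e^{-x²}](s + 1) = Γ((s + 1) / 2) / 2`. Legendre's duplication formula for
`Γ(s / 2) Γ((s + 1) / 2)` turns this into the stated form.
-/

open MeasureTheory Complex

/-- The complementary error function `erfc(x) = (2/√π) ∫_x^∞ e^{-t²} dt`. -/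
noncomputable def erfc (x : ℝ) : ℝ :=
  2 / Real.sqrt Real.pi * ∫ t in Set.Ioi x, Real.exp (-t ^ 2)

open Set Filter Asymptotics Topology

theorem mellinConvergent_of_continuous_of_isBigO_exp {E : Type*} [NormedAddCommGroup E]
    [NormedSpace ℂ E] {f : ℝ → E} (hf : Continuous f) {a : ℝ}
    (ha : 0 < a) (hf_top : f =O[atTop] fun x => Real.exp (-a * x)) {s : ℂ} (hs : 0 < s.re) :
    MellinConvergent f s := by
  have hf_bot : f =O[𝓝[>] 0] (· ^ (-(0 : ℝ))) := by
    simpa only [neg_zero, Real.rpow_zero] using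
      ((hf.tendsto 0).mono_left nhdsWithin_le_nhds).isBigO_one ℝ
  exact mellinConvergent_of_isBigO_rpow_exp ha (hf.locallyIntegrable.locallyIntegrableOn _)
    hf_top hf_bot hs

theorem tendsto_cpow_mul_of_isBigO {l : Filter ℝ} (hl : ∀ᶠ x in l, 0 < x) {f : ℝ → ℂ} {g : ℝ → ℝ}
    (hf : f =O[l] g) {s : ℂ} (hg : Tendsto (fun x : ℝ => x ^ s.re * g x) l (𝓝 0)) :
    Tendsto (fun x : ℝ => (x : ℂ) ^ s * f x) l (𝓝 0) := by
  have hpow : (fun x : ℝ => (x : ℂ) ^ s) =O[l] fun x => x ^ s.re := by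
    refine IsBigO.of_bound 1 ?_
    filter_upwards [hl] with x hx
    rw [norm_cpow_eq_rpow_re_of_pos hx, Real.norm_of_nonneg (Real.rpow_nonneg hx.le _), one_mul]
  exact (hpow.mul hf).trans_tendsto hg

theorem mellin_eq_neg_mellin_deriv_div {f f' : ℝ → ℂ} {s : ℂ} (hs : s ≠ 0)
    (hf : ∀ x ∈ Ioi (0 : ℝ), HasDerivAt f (f' x) x) (hfs : MellinConvergent f s)
    (hf's : MellinConvergent f' (s + 1))
    (h_zero : Tendsto (fun x : ℝ => (x : ℂ) ^ s * f x) (𝓝[>] 0) (𝓝 0))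
    (h_top : Tendsto (fun x : ℝ => (x : ℂ) ^ s * f x) atTop (𝓝 0)) :
    mellin f s = -mellin f' (s + 1) / s := by
  have hu : ∀ x ∈ Ioi (0 : ℝ), HasDerivAt (fun x : ℝ => (x : ℂ) ^ s / s) ((x : ℂ) ^ (s - 1)) x := by
    intro x hx
    simpa using hasDerivAt_ofReal_cpow_const' (ne_of_gt hx) (r := s - 1) (by simpa using hs)
  have hmul : (fun x : ℝ => (x : ℂ) ^ s / s) * f' =
      fun x : ℝ => s⁻¹ * ((x : ℂ) ^ (s + 1 - 1) • f' x) := by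
    ext x
    simp only [Pi.mul_apply, add_sub_cancel_right, smul_eq_mul]
    ring
  have hIBP := integral_Ioi_mul_deriv_eq_deriv_mul hu hf (hmul ▸ hf's.const_mul s⁻¹) hfs
    (by simpa [Pi.mul_def, mul_div_right_comm] using h_zero.div_const s)
    (by simpa [Pi.mul_def, mul_div_right_comm] using h_top.div_const s)
  have hlhs : ∫ x in Ioi (0 : ℝ), (x : ℂ) ^ s / s * f' x = s⁻¹ * mellin f' (s + 1) := by
    rw [mellin, ← integral_const_mul]
    exact congrArg (fun g : ℝ → ℂ => ∫ x in Ioi (0 : ℝ), g x) hmul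
  rw [hlhs] at hIBP
  rw [mellin]
  simp only [smul_eq_mul]
  linear_combination hIBP

lemma integrable_exp_neg_sq : Integrable fun t : ℝ => Real.exp (-t ^ 2) := by
  simpa using integrable_exp_neg_mul_sq one_pos

lemma exp_neg_sq_isBigO_exp_neg :
    (fun x => (Real.exp (-x ^ 2) : ℂ)) =O[atTop] fun x => Real.exp (-1 * x) := by
  simpa only [isBigO_ofReal_left, one_mul, neg_one_mul] using
    (exp_neg_mul_sq_isLittleO_exp_neg one_pos).isBigO

lemma mellin_exp_neg {s : ℂ} (hs : 0 < s.re) :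
    mellin (fun x : ℝ => (Real.exp (-x) : ℂ)) s = Gamma s := by
  rw [Gamma_eq_integral hs, GammaIntegral]
  exact setIntegral_congr_fun measurableSet_Ioi fun x _ => by rw [smul_eq_mul, mul_comm]

lemma mellin_exp_neg_sq {s : ℂ} (hs : 0 < s.re) :
    mellin (fun x : ℝ => (Real.exp (-x ^ 2) : ℂ)) s = Gamma (s / 2) / 2 := by
  have := mellin_comp_rpow (fun x : ℝ => (Real.exp (-x) : ℂ)) s 2
  simp only [Real.rpow_two, ofReal_ofNat] at this
  rw [this, mellin_exp_neg (by simpa using hs), real_smul, abs_two, ofReal_inv, ofReal_ofNat,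
    inv_mul_eq_div]

lemma erfc_eq_sub_intervalIntegral (x : ℝ) :
    erfc x = 2 / Real.sqrt Real.pi *
      ((∫ t in Ioi 0, Real.exp (-t ^ 2)) - ∫ t in (0 : ℝ)..x, Real.exp (-t ^ 2)) := by
  rw [erfc, ← intervalIntegral.integral_Ioi_sub_Ioi' integrable_exp_neg_sq.integrableOn
    integrable_exp_neg_sq.integrableOn, sub_sub_cancel]

lemma hasDerivAt_erfc (x : ℝ) :
    HasDerivAt erfc (-(2 / Real.sqrt Real.pi * Real.exp (-x ^ 2))) x := by
  have hcont : Continuous fun t : ℝ => Real.exp (-t ^ 2) := by fun_prop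
  have hint : HasDerivAt (fun y => ∫ t in (0 : ℝ)..y, Real.exp (-t ^ 2)) (Real.exp (-x ^ 2)) x :=
    intervalIntegral.integral_hasDerivAt_right integrable_exp_neg_sq.intervalIntegrable
      (hcont.stronglyMeasurableAtFilter _ _) hcont.continuousAt
  rw [funext erfc_eq_sub_intervalIntegral, ← mul_neg, ← zero_sub]
  exact ((hasDerivAt_const x _).sub hint).const_mul _

lemma hasDerivAt_ofReal_erfc (x : ℝ) :
    HasDerivAt (fun x => (erfc x : ℂ))
      (-(2 / Real.sqrt Real.pi : ℂ) • (Real.exp (-x ^ 2) : ℂ)) x := by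
  simpa using (hasDerivAt_erfc x).ofReal_comp

lemma continuous_erfc : Continuous erfc :=
  continuous_iff_continuousAt.2 fun x => (hasDerivAt_erfc x).continuousAt

lemma erfc_nonneg (x : ℝ) : 0 ≤ erfc x :=
  mul_nonneg (by positivity) (setIntegral_nonneg measurableSet_Ioi fun t _ => (Real.exp_pos _).le)

lemma erfc_le_exp_neg {x : ℝ} (hx : 1 ≤ x) :
    erfc x ≤ 2 / Real.sqrt Real.pi * Real.exp (-x) := by
  refine mul_le_mul_of_nonneg_left ?_ (by positivity)
  rw [← integral_exp_neg_Ioi]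
  refine setIntegral_mono_on integrable_exp_neg_sq.integrableOn
    (by simpa using exp_neg_integrableOn_Ioi x one_pos) measurableSet_Ioi fun t ht => ?_
  have : t ≤ t ^ 2 := by nlinarith [hx.trans (le_of_lt ht)]
  exact Real.exp_le_exp.2 (by linarith)

lemma erfc_isBigO_exp_neg : (fun x => (erfc x : ℂ)) =O[atTop] fun x => Real.exp (-1 * x) := by
  rw [isBigO_ofReal_left]
  refine IsBigO.of_bound (2 / Real.sqrt Real.pi) ?_
  filter_upwards [eventually_ge_atTop 1] with x hx
  rw [Real.norm_of_nonneg (erfc_nonneg x), Real.norm_of_nonneg (Real.exp_pos _).le, neg_one_mul]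
  exact erfc_le_exp_neg hx

lemma ofReal_sqrt_pi_ne_zero : (Real.sqrt Real.pi : ℂ) ≠ 0 :=
  ofReal_ne_zero.2 (Real.sqrt_pos.2 Real.pi_pos).ne'

theorem Gamma_add_one_div_two_div_sqrt_pi_mul {s : ℂ} (hs : Gamma (s / 2) ≠ 0) :
    Gamma ((s + 1) / 2) / (Real.sqrt Real.pi * s) = 2 ^ (-s) * Gamma s / Gamma (1 + s / 2) := by
  have hs0 : s ≠ 0 := by rintro rfl; rw [zero_div, Gamma_zero] at hs; exact hs rfl
  have hdup := Gamma_mul_Gamma_add_half (s / 2)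
  rw [show s / 2 + 1 / 2 = (s + 1) / 2 by ring, mul_div_cancel₀ s two_ne_zero,
    show (1 : ℂ) - s = 1 + -s by ring, cpow_add _ _ two_ne_zero, cpow_one] at hdup
  have hpi := ofReal_sqrt_pi_ne_zero
  rw [add_comm 1, Gamma_add_one _ (div_ne_zero hs0 two_ne_zero)]
  field_simp
  linear_combination hdup

theorem mellin_erfc_eq_Gamma_div {s : ℂ} (hs : 0 < s.re) :
    mellin (fun x : ℝ => (erfc x : ℂ)) s = Gamma ((s + 1) / 2) / (Real.sqrt Real.pi * s) := by
  have hs0 : s ≠ 0 := by rintro rfl; simp at hs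
  have hs1 : 0 < (s + 1).re := by rw [add_re, one_re]; linarith
  have hcont : Continuous fun x => (erfc x : ℂ) := continuous_ofReal.comp continuous_erfc
  rw [mellin_eq_neg_mellin_deriv_div hs0 (fun x _ => hasDerivAt_ofReal_erfc x)
    (mellinConvergent_of_continuous_of_isBigO_exp hcont one_pos erfc_isBigO_exp_neg hs)
    ((mellinConvergent_of_continuous_of_isBigO_exp (by fun_prop) one_pos
      exp_neg_sq_isBigO_exp_neg hs1).const_smul _)
    (tendsto_cpow_mul_of_isBigO self_mem_nhdsWithin
      (((hcont.tendsto 0).mono_left nhdsWithin_le_nhds).isBigO_one ℝ) ?_)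
    (tendsto_cpow_mul_of_isBigO (eventually_gt_atTop 0) erfc_isBigO_exp_neg
      (tendsto_rpow_mul_exp_neg_mul_atTop_nhds_zero s.re 1 one_pos)),
    mellin_const_smul, mellin_exp_neg_sq hs1]
  · have hpi := ofReal_sqrt_pi_ne_zero
    rw [smul_eq_mul]
    field_simp
  · simpa [Real.zero_rpow hs.ne'] using
      (Real.continuousAt_rpow_const 0 s.re (Or.inr hs.le)).tendsto.mono_left nhdsWithin_le_nhds

/-- The Mellin transform of `erfc` is `2^{-s} Γ(s) / Γ(1 + s/2)` for `Re(s) > 0`. -/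
theorem mellin_erfc (s : ℂ) (hs : 0 < s.re) :
    mellin (fun x : ℝ => (erfc x : ℂ)) s =
      (2 : ℂ) ^ (-s) * Complex.Gamma s / Complex.Gamma (1 + s / 2) := by
  rw [mellin_erfc_eq_Gamma_div hs, Gamma_add_one_div_two_div_sqrt_pi_mul]
  exact Gamma_ne_zero_of_re_pos (by simpa using div_pos hs two_pos)
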